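/- Let p ≥ 2 and let x₁, …, x_p be vectors in ℝⁿ, each of norm 1, such that |⟨xᵢ, x₁⟩| > √2/2 for every i = 2, …, p. Define ε_j = 1 if ⟨x₁, x_j⟩ ≥ 0 and ε_j = −1 otherwise (so ε₁ = 1). Then for every pair i ≠ j one has εᵢ ε_j ⟨xᵢ, x_j⟩ > 0; that is, the explicit sign choice sgn(⟨x₁, x_j⟩) produces an all-positive-correlations arrangement x₁, sgn(⟨x₁,x₂⟩)x₂, …, sgn(⟨x₁,x_p⟩)x_p. -/

import Mathlib

/-! Flipping `x j` by the sign of `⟨x₁, x j⟩` turns the hypothesis into `⟨x₁, ε j x j⟩ > √2/2`,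
i.e. every flipped vector lies within angle `π/4` of `x₁`. By the triangle inequality for angles,
any two of them are then less than `π/2` apart, so their inner product is positive. -/

open InnerProductGeometry Real
open scoped RealInnerProductSpace

section

variable {V : Type*} [NormedAddCommGroup V] [InnerProductSpace ℝ V]

lemma angle_lt_of_cos_lt_cos_angle {x y : V} {θ : ℝ} (hθ : 0 ≤ θ)
    (h : cos θ < cos (angle x y)) : angle x y < θ := by
  by_contra! hle
  exact (cos_le_cos_of_nonneg_of_le_pi hθ (angle_le_pi x y) hle).not_gt h

lemma angle_lt_pi_div_four_of_sqrt_two_div_two_lt_inner {x y : V} (hx : ‖x‖ = 1)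
    (hy : ‖y‖ = 1) (h : √2 / 2 < ⟪x, y⟫) : angle x y < π / 4 :=
  angle_lt_of_cos_lt_cos_angle (by positivity) <| by
    rwa [cos_pi_div_four, ← inner_eq_cos_angle_of_norm_eq_one hx hy]

theorem inner_pos_of_sqrt_two_div_two_lt_inner {e y z : V} (he : ‖e‖ = 1) (hy : ‖y‖ = 1)
    (hz : ‖z‖ = 1) (hey : √2 / 2 < ⟪e, y⟫) (hez : √2 / 2 < ⟪e, z⟫) : 0 < ⟪y, z⟫ := by
  have hyz : angle y z < π / 2 := calc
    angle y z ≤ angle y e + angle e z := angle_le_angle_add_angle y e z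
    _ < π / 4 + π / 4 := by
      rw [angle_comm]
      exact add_lt_add (angle_lt_pi_div_four_of_sqrt_two_div_two_lt_inner he hy hey)
        (angle_lt_pi_div_four_of_sqrt_two_div_two_lt_inner he hz hez)
    _ = π / 2 := by ring
  rw [inner_eq_cos_angle_of_norm_eq_one hy hz]
  exact cos_pos_of_mem_Ioo ⟨by linarith [angle_nonneg y z, pi_pos], hyz⟩

end

/-- With the explicit sign choice `ε j = sgn ⟨x₁, x_j⟩` (and `ε₁ = 1`),
the vectors `ε j • x j` form an all-positive-correlations arrangement:
`ε i * ε j * ⟨xᵢ, x_j⟩ > 0` for all `i ≠ j`. -/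
theorem apc_arrangement_explicit (n p : ℕ) (hp : 2 ≤ p)
    (x : Fin p → EuclideanSpace ℝ (Fin n))
    (hnorm : ∀ i, ‖x i‖ = 1)
    (hcorr : ∀ i : Fin p, i ≠ ⟨0, by omega⟩ →
      |(inner ℝ (x i) (x ⟨0, by omega⟩) : ℝ)| > Real.sqrt 2 / 2)
    (ε : Fin p → ℝ)
    (hε : ∀ j : Fin p,
      ε j = if (0 : ℝ) ≤ (inner ℝ (x ⟨0, by omega⟩) (x j) : ℝ) then 1 else -1) :
    ∀ i j : Fin p, i ≠ j → (0 : ℝ) < ε i * ε j * (inner ℝ (x i) (x j) : ℝ) := by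
  intro i j _
  set x₀ := x ⟨0, by omega⟩
  have hcorr₀ : ∀ k, √2 / 2 < |⟪x₀, x k⟫| := by
    intro k
    by_cases hk : k = ⟨0, by omega⟩
    · rw [hk, inner_self_eq_one_of_norm_eq_one (hnorm _), abs_one]
      linarith [(sqrt_lt' two_pos).2 (by norm_num : (2 : ℝ) < 2 ^ 2)]
    · rw [real_inner_comm]
      exact hcorr k hk
  have hflip : ∀ k, ‖ε k • x k‖ = 1 ∧ √2 / 2 < ⟪x₀, ε k • x k⟫ := by
    intro k
    rw [norm_smul, real_inner_smul_right, hnorm, hε k]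
    split_ifs with h
    · simpa [abs_of_nonneg h] using hcorr₀ k
    · simpa [abs_of_neg (not_le.mp h)] using hcorr₀ k
  have h := inner_pos_of_sqrt_two_div_two_lt_inner (hnorm _) (hflip i).1 (hflip j).1
    (hflip i).2 (hflip j).2
  rwa [real_inner_smul_left, real_inner_smul_right, ← mul_assoc] at h
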